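/- Let (X, ·, ≤) be a topological po-group whose underlying space is locally compact and which is order-connected: for all x ≤ y the order interval [x, y] = {z : x ≤ z ≤ y} is connected. Then the canonical map x ↦ x↓ = {z ∈ X : z ≤ x} is a topological embedding (a homeomorphism onto its image) of X into C(X) equipped with the Fell topology, and it is an order-embedding: x ≤ y if and only if x↓ ⊆ y↓. -/

import Mathlib

open Set Filter Topology TopologicalSpace

/-- The Fell topology on the hyperspace of closed subsets of `X`: it is generated by the
sets `{A : A ∩ O ≠ ∅}` for `O` open and the sets `{A : A ∩ K = ∅}` for `K` compact. -/
instance fellTopology (X : Type*) [TopologicalSpace X] : TopologicalSpace (Closeds X) :=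
  TopologicalSpace.generateFrom
    ({S | ∃ O : Set X, IsOpen O ∧ S = {A : Closeds X | ((A : Set X) ∩ O).Nonempty}} ∪
     {S | ∃ K : Set X, IsCompact K ∧ S = {A : Closeds X | (A : Set X) ∩ K = ∅}})

/-- If the order graph is closed, every principal ideal is closed. -/
lemma isClosed_Iic_of_isClosed_le {X : Type*} [Preorder X] [TopologicalSpace X]
    (h : IsClosed {p : X × X | p.1 ≤ p.2}) (x : X) : IsClosed (Set.Iic x) :=
  h.preimage (f := fun z : X => (z, x)) (continuous_id.prodMk continuous_const)

set_option linter.unusedSectionVars false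

section helpers
variable {X : Type*} [TopologicalSpace X]

/-- A connected set meeting an open set and the complement of its closure meets its frontier. -/
lemma cross_frontier {s t : Set X} (hs : IsPreconnected s) (ht : IsOpen t)
    (h1 : (s ∩ t).Nonempty) (h2 : (s \ closure t).Nonempty) : (s ∩ frontier t).Nonempty := by
  by_contra hno
  rw [not_nonempty_iff_eq_empty] at hno
  have hsub : s ⊆ t ∪ (closure t)ᶜ := by
    intro z hz
    rcases Classical.em (z ∈ closure t) with h | h
    · left
      have : z ∉ frontier t := fun hf => (eq_empty_iff_forall_notMem.mp hno z) ⟨hz, hf⟩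
      rcases Classical.em (z ∈ t) with h' | h'
      · exact h'
      · exact absurd ⟨h, by rwa [ht.interior_eq]⟩ this
    · exact Or.inr h
  obtain ⟨z, hzs, hzt, hzc⟩ := hs t (closure t)ᶜ ht isClosed_closure.isOpen_compl hsub h1
    ⟨h2.choose, h2.choose_spec.1, h2.choose_spec.2⟩
  exact hzc (subset_closure hzt)

/-- The upward closure of a compact set is closed when the order graph is closed. -/
lemma isClosed_upward [Preorder X] (hclosed : IsClosed {p : X × X | p.1 ≤ p.2})
    {K : Set X} (hK : IsCompact K) : IsClosed {x : X | ∃ z ∈ K, z ≤ x} := by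
  rw [← isOpen_compl_iff, isOpen_iff_forall_mem_open]
  intro x hx
  simp only [mem_compl_iff, mem_setOf_eq, not_exists, not_and] at hx
  have h : ∀ z : X, z ∈ K → ∃ u v : Set X, IsOpen u ∧ IsOpen v ∧ z ∈ u ∧ x ∈ v ∧
      ∀ a ∈ u, ∀ b ∈ v, ¬ a ≤ b := by
    intro z hz
    have hzo : ((z, x) : X × X) ∈ {p : X × X | p.1 ≤ p.2}ᶜ := fun h => hx z hz h
    obtain ⟨u, v, hu, hv, hzu, hxv, huv⟩ :=
      isOpen_prod_iff.mp hclosed.isOpen_compl z x hzo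
    exact ⟨u, v, hu, hv, hzu, hxv, fun a ha b hb hab => huv (mk_mem_prod ha hb) hab⟩
  choose u v hu hv hzu hxv hprop using h
  obtain ⟨t, ht⟩ := hK.elim_finite_subcover (fun z : K => u z z.2)
    (fun z => hu z z.2) (fun z hz => mem_iUnion.mpr ⟨⟨z, hz⟩, hzu z hz⟩)
  refine ⟨⋂ z ∈ t, v z z.2, ?_, ?_, ?_⟩
  · intro y hy
    simp only [mem_compl_iff, mem_setOf_eq, not_exists, not_and]
    intro z hz hzy
    obtain ⟨i, hit, hiu⟩ := mem_iUnion₂.mp (ht hz)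
    exact hprop i i.2 z hiu y (mem_iInter₂.mp hy i hit) hzy
  · exact isOpen_biInter_finset (fun z _ => hv z z.2)
  · exact mem_iInter₂.mpr fun z _ => hxv z z.2

end helpers


section key
variable {X : Type*} [Group X] [PartialOrder X] [TopologicalSpace X] [IsTopologicalGroup X]
    [T2Space X] [LocallyCompactSpace X]

/-- Key lemma: order intervals `[1, c]` shrink into any neighborhood of `1` as `c → 1`. -/
lemma interval_small (hclosed : IsClosed {p : X × X | p.1 ≤ p.2})
    (hconn : ∀ x y : X, x ≤ y → IsConnected (Set.Icc x y))
    {W : Set X} (hW : IsOpen W) (h1W : (1 : X) ∈ W) :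
    ∃ W₀ : Set X, IsOpen W₀ ∧ (1 : X) ∈ W₀ ∧ W₀ ⊆ W ∧
      ∀ c ∈ W₀, ∀ b : X, 1 ≤ b → b ≤ c → b ∈ W := by
  classical
  obtain ⟨C, hCcomp, hC1, hCW⟩ := exists_compact_subset hW h1W
  set V : Set X := interior C with hVdef
  have hVopen : IsOpen V := isOpen_interior
  have h1V : (1 : X) ∈ V := hC1
  have hclV : closure V ⊆ C := closure_minimal interior_subset hCcomp.isClosed
  have hclVcomp : IsCompact (closure V) := hCcomp.of_isClosed_subset isClosed_closure hclV
  have hFr : IsCompact (frontier V) :=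
    hclVcomp.of_isClosed_subset isClosed_frontier frontier_subset_closure
  -- a neighborhood N of 1 avoiding "1 ≤ b ≤ c with b on the frontier"
  have key : ∃ N : Set X, IsOpen N ∧ (1 : X) ∈ N ∧
      ∀ c ∈ N, ∀ b ∈ frontier V, ¬ (1 ≤ b ∧ b ≤ c) := by
    have h : ∀ b : X, b ∈ frontier V → ∃ u n : Set X, IsOpen u ∧ IsOpen n ∧ b ∈ u ∧
        (1 : X) ∈ n ∧ ∀ b' ∈ u, ∀ c ∈ n, ¬ (1 ≤ b' ∧ b' ≤ c) := by
      intro b hb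
      rcases Classical.em ((1 : X) ≤ b) with hle | hle
      · have hb1 : b ≠ 1 := by
          intro h
          rw [h] at hb
          exact hb.2 (by rwa [hVopen.interior_eq])
        have hnb1 : ¬ b ≤ 1 := fun h => hb1 (le_antisymm h hle)
        have : ((b, (1:X)) : X × X) ∈ {p : X × X | p.1 ≤ p.2}ᶜ := hnb1
        obtain ⟨u, n, hu, hn, hbu, h1n, hun⟩ :=
          isOpen_prod_iff.mp hclosed.isOpen_compl b 1 this
        refine ⟨u, n, hu, hn, hbu, h1n, fun b' hb' c hc ⟨_, hb'c⟩ => ?_⟩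
        -- from b' ≤ c need ¬ b' ≤ c: we only know (b', z) ∉ graph for z ∈ n
        exact hun (mk_mem_prod hb' hc) hb'c
      · refine ⟨(Ici (1 : X))ᶜ, univ, ?_, isOpen_univ, hle, mem_univ _,
          fun b' hb' c _ ⟨h1b', _⟩ => hb' h1b'⟩
        have : IsClosed (Ici (1 : X)) :=
          hclosed.preimage (f := fun z : X => ((1 : X), z))
            (continuous_const.prodMk continuous_id)
        exact this.isOpen_compl
    choose u n hu hn hbu h1n hprop using h
    obtain ⟨t, ht⟩ := hFr.elim_finite_subcover (fun b : frontier V => u b b.2)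
      (fun b => hu b b.2) (fun b hb => mem_iUnion.mpr ⟨⟨b, hb⟩, hbu b hb⟩)
    refine ⟨⋂ b ∈ t, n b b.2, isOpen_biInter_finset (fun b _ => hn b b.2),
      mem_iInter₂.mpr fun b _ => h1n b b.2, ?_⟩
    intro c hc b hb hcb
    obtain ⟨i, hit, hiu⟩ := mem_iUnion₂.mp (ht hb)
    exact hprop i i.2 b hiu c (mem_iInter₂.mp hc i hit) hcb
  obtain ⟨N, hNopen, h1N, hNprop⟩ := key
  refine ⟨N ∩ V, hNopen.inter hVopen, ⟨h1N, h1V⟩,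
    fun z hz => hCW (interior_subset hz.2), ?_⟩
  intro c hc b h1b hbc
  by_contra hbW
  have hbV : b ∉ V := fun h => hbW (hCW (interior_subset h))
  have hbcl : b ∉ closure V := fun h => hNprop c hc.1 b ⟨h, by rwa [hVopen.interior_eq]⟩ ⟨h1b, hbc⟩
  have h1c : (1 : X) ≤ c := le_trans h1b hbc
  have hicc := hconn 1 c h1c
  obtain ⟨z, hzicc, hzfr⟩ := cross_frontier hicc.isPreconnected hVopen
    ⟨1, ⟨le_refl 1, h1c⟩, h1V⟩ ⟨b, ⟨h1b, hbc⟩, hbcl⟩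
  exact hNprop c hc.1 z hzfr ⟨hzicc.1, hzicc.2⟩
end key


/-- Let `(X, ·, ≤)` be a topological po-group (a Hausdorff topological group
with a translation-invariant closed partial order) whose underlying space is locally compact
and which is order-connected (order intervals `Icc x y` are connected).  Then the canonical
map `x ↦ x↓ = Iic x` is a topological embedding of `X` into `C(X)` with the Fell topology,
and an order-embedding: `x ≤ y ↔ Iic x ⊆ Iic y`. -/
theorem isEmbedding_principalIdeal_fell_of_topological_pogroup
    {X : Type*} [Group X] [PartialOrder X] [TopologicalSpace X] [IsTopologicalGroup X]
    [T2Space X] [LocallyCompactSpace X]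
    (hmul_right : ∀ x y z : X, x ≤ y → x * z ≤ y * z)
    (hmul_left : ∀ x y z : X, x ≤ y → z * x ≤ z * y)
    (hclosed : IsClosed {p : X × X | p.1 ≤ p.2})
    (hconn : ∀ x y : X, x ≤ y → IsConnected (Set.Icc x y)) :
    IsEmbedding (fun x : X =>
      (⟨Set.Iic x, isClosed_Iic_of_isClosed_le hclosed x⟩ : Closeds X)) ∧
    ∀ x y : X, x ≤ y ↔ Set.Iic x ⊆ Set.Iic y := by
  classical
  set f : X → Closeds X := fun x => ⟨Set.Iic x, isClosed_Iic_of_isClosed_le hclosed x⟩ with hfdef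
  have hIic : ∀ x y : X, x ≤ y ↔ Set.Iic x ⊆ Set.Iic y := by
    intro x y
    exact ⟨fun h z hz => le_trans hz h, fun h => h (mem_Iic.mpr le_rfl)⟩
  -- continuity of f
  have hcont : Continuous f := by
    apply continuous_generateFrom_iff.mpr
    rintro S (⟨O, hO, rfl⟩ | ⟨K, hK, rfl⟩)
    · have heq : f ⁻¹' {A : Closeds X | ((A : Set X) ∩ O).Nonempty} =
          ⋃ p : {p : X // 1 ≤ p}, (· * (p : X)) '' O := by
        ext x
        simp only [mem_preimage, mem_setOf_eq, mem_iUnion, mem_image]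
        constructor
        · rintro ⟨z, hzx, hzO⟩
          refine ⟨⟨z⁻¹ * x, by simpa using hmul_left z x z⁻¹ hzx⟩, z, hzO, by
            simp [mul_assoc]⟩
        · rintro ⟨⟨p, hp⟩, z, hzO, rfl⟩
          exact ⟨z, by show z ∈ Set.Iic (z * p); simpa using hmul_left 1 p z hp, hzO⟩
      rw [heq]
      exact isOpen_iUnion fun p => isOpenMap_mul_right (p : X) O hO
    · have heq : f ⁻¹' {A : Closeds X | (A : Set X) ∩ K = ∅} =
          {x : X | ∃ z ∈ K, z ≤ x}ᶜ := by
        ext x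
        simp only [mem_preimage, mem_setOf_eq, mem_compl_iff, not_exists,
          eq_empty_iff_forall_notMem]
        simp only [mem_inter_iff, mem_Iic]
        tauto
      rw [heq]
      exact (isClosed_upward hclosed hK).isOpen_compl
  -- the key pointwise construction
  have hpoint : ∀ U : Set X, IsOpen U → ∀ x ∈ U,
      ∃ T : Set (Closeds X), IsOpen T ∧ x ∈ f ⁻¹' T ∧ f ⁻¹' T ⊆ U := by
    intro U hUopen x hxU
    set U' : Set X := (fun g => x * g) ⁻¹' U with hU'def
    have hU'open : IsOpen U' := hUopen.preimage (continuous_const.mul continuous_id)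
    have h1U' : (1 : X) ∈ U' := by simp [hU'def, hxU]
    obtain ⟨C, hCcomp, hC1, hCU'⟩ := exists_compact_subset hU'open h1U'
    set V : Set X := interior C with hVdef
    have hVopen : IsOpen V := isOpen_interior
    have h1V : (1 : X) ∈ V := hC1
    have hclV : closure V ⊆ C := closure_minimal interior_subset hCcomp.isClosed
    have hclVc : IsCompact (closure V) := hCcomp.of_isClosed_subset isClosed_closure hclV
    have hclVU' : closure V ⊆ U' := hclV.trans hCU'
    obtain ⟨W₀', hW₀'open, h1W₀', _, hW₀'prop⟩ := interval_small hclosed hconn hVopen h1V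
    obtain ⟨B, hBnhds, hBmul⟩ := compact_open_separated_mul_left hclVc hU'open hclVU'
    set D : Set X := interior B ∩ (fun a : X => a⁻¹) ⁻¹' W₀' with hDdef
    have hDopen : IsOpen D := isOpen_interior.inter (hW₀'open.preimage continuous_inv)
    have h1D : (1 : X) ∈ D := ⟨mem_interior_iff_mem_nhds.mpr hBnhds, by simpa using h1W₀'⟩
    obtain ⟨C₀, hC₀comp, hC₀1, hC₀D⟩ := exists_compact_subset hDopen h1D
    set W₀ : Set X := interior C₀ with hW₀def
    have hclW₀ : closure W₀ ⊆ C₀ := closure_minimal interior_subset hC₀comp.isClosed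
    have hclW₀c : IsCompact (closure W₀) := hC₀comp.of_isClosed_subset isClosed_closure hclW₀
    have hIci : IsClosed (Ici (1 : X)) :=
      hclosed.preimage (f := fun z : X => ((1 : X), z)) (continuous_const.prodMk continuous_id)
    set F : Set X := frontier V ∩ Ici (1 : X) with hFdef
    have hFcomp : IsCompact F :=
      ((hclVc.of_isClosed_subset isClosed_frontier frontier_subset_closure).inter_right hIci)
    set K : Set X := (fun p : X × X => x * p.1 * p.2) '' ((closure W₀) ×ˢ F) with hKdef
    have hKcomp : IsCompact K := (hclW₀c.prod hFcomp).image
      ((continuous_const.mul continuous_fst).mul continuous_snd)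
    set O : Set X := (fun g => x * g) '' W₀ with hOdef
    have hOopen : IsOpen O := isOpenMap_mul_left x W₀ isOpen_interior
    refine ⟨{A : Closeds X | ((A : Set X) ∩ O).Nonempty} ∩
      {A : Closeds X | (A : Set X) ∩ K = ∅}, ?_, mem_preimage.mpr (mem_inter ?_ ?_), ?_⟩
    · exact (isOpen_generateFrom_of_mem (Or.inl ⟨O, hOopen, rfl⟩)).inter
        (isOpen_generateFrom_of_mem (Or.inr ⟨K, hKcomp, rfl⟩))
    · -- Iic x meets O
      show (Set.Iic x ∩ O).Nonempty
      exact ⟨x, mem_Iic.mpr le_rfl, ⟨1, hC₀1, by simp⟩⟩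
    · -- Iic x misses K
      show (Set.Iic x ∩ K) = ∅
      rw [eq_empty_iff_forall_notMem]
      rintro q ⟨hqx, ⟨⟨a, b⟩, ⟨haW, hbfr, h1b⟩, rfl⟩⟩
      have hab1 : a * b ≤ 1 := by
        have := hmul_left _ _ x⁻¹ hqx
        simpa [mul_assoc] using this
      have hba : b ≤ a⁻¹ := by
        have := hmul_left _ _ a⁻¹ hab1
        simpa [mul_assoc] using this
      have hainv : a⁻¹ ∈ W₀' := (hC₀D (hclW₀ haW)).2
      have hbV : b ∈ V := hW₀'prop a⁻¹ hainv b h1b hba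
      rw [hVopen.frontier_eq] at hbfr
      exact hbfr.2 hbV
    · -- the preimage is inside U
      rintro y ⟨⟨z, hzy, hzO⟩, hyK⟩
      by_contra hyU
      obtain ⟨w, hwW₀, rfl⟩ := hzO
      have hiccconn := hconn _ y hzy
      set t : Set X := (fun g => x * w * g) '' V with htdef
      have htopen : IsOpen t := isOpenMap_mul_left (x * w) V hVopen
      have hwB : w ∈ B := interior_subset (hC₀D (interior_subset hwW₀)).1
      have hclt : closure t ⊆ U := by
        have hcleq : closure t = (fun g => x * w * g) '' closure V :=
          ((Homeomorph.mulLeft (x * w)).image_closure V).symm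
        rw [hcleq]
        rintro _ ⟨v, hv, rfl⟩
        have hwv : w * v ∈ U' := hBmul (mul_mem_mul hwB hv)
        simpa [hU'def, mul_assoc] using hwv
      obtain ⟨zz, hzzicc, hzzfr⟩ := cross_frontier hiccconn.isPreconnected htopen
        ⟨x * w, ⟨le_rfl, hzy⟩, ⟨1, h1V, by simp⟩⟩
        ⟨y, ⟨hzy, le_rfl⟩, fun h => hyU (hclt h)⟩
      have hfr : frontier t = (fun g => x * w * g) '' frontier V := by
        have h1 : closure t = (fun g => x * w * g) '' closure V :=
          ((Homeomorph.mulLeft (x * w)).image_closure V).symm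
        have h2 : interior t = t := htopen.interior_eq
        rw [frontier, h1, h2, htdef, hVopen.frontier_eq,
          image_diff (mul_right_injective (x * w))]
      rw [hfr] at hzzfr
      obtain ⟨b, hbfr, rfl⟩ := hzzfr
      have h1b : (1 : X) ≤ b := by
        have := hmul_left _ _ (x * w)⁻¹ hzzicc.1
        simpa [mul_assoc] using this
      have : x * w * b ∈ Set.Iic y ∩ K := by
        refine ⟨mem_Iic.mpr hzzicc.2, ⟨(w, b), ⟨subset_closure hwW₀, hbfr, h1b⟩, rfl⟩⟩
      have hemp : Set.Iic y ∩ K = ∅ := hyK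
      rw [hemp] at this
      exact this
  refine ⟨⟨⟨?_⟩, ?_⟩, hIic⟩
  · -- topology is induced
    refine le_antisymm (continuous_iff_le_induced.mp hcont) ?_
    rw [TopologicalSpace.le_def]
    intro U hU
    choose T hTopen hxT hTU using fun x : U => hpoint U hU x x.2
    refine isOpen_induced_iff.mpr ⟨⋃ x : U, T x, isOpen_iUnion hTopen, ?_⟩
    apply subset_antisymm
    · intro y hy
      rw [mem_preimage, mem_iUnion] at hy
      obtain ⟨x, hx⟩ := hy
      exact hTU x hx
    · intro y hy
      rw [mem_preimage, mem_iUnion]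
      exact ⟨⟨y, hy⟩, hxT ⟨y, hy⟩⟩
  · -- injective
    intro a b hab
    have h : Set.Iic a = Set.Iic b := congrArg (fun A : Closeds X => (A : Set X)) hab
    have h1 : a ∈ Set.Iic b := h ▸ mem_Iic.mpr (le_refl a)
    have h2 : b ∈ Set.Iic a := h.symm ▸ mem_Iic.mpr (le_refl b)
    exact le_antisymm h1 h2
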